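/- The tropical equilibration set of the system {y − x − εx⁴ = 0, x − y + εy² = 0}, i.e., the set of pairs (a₁, a₂) ∈ ℝ² satisfying min(a₁, 1 + 4a₁) = a₂ and min(a₁, 1 + 2a₂) = a₂ (with the minimum in each tropical polynomial attained by monomials of opposite signs), equals the union of the half-line {(a, a) : a ≥ −1/3} and the isolated point (−1/2, −1). -/

import Mathlib

/-! Each equation says which of its two tropical monomials attains the minimum. When `x` is
dominant in both, `a₁ = a₂ ≥ -1/3`; otherwise the second equation forces `a₂ = -1`, and this is
compatible with the first only through `a₂ = 1 + 4a₁`, i.e. at `a₁ = -1/2`. -/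

lemma min_one_add_four_mul_eq_iff {a b : ℝ} :
    min a (1 + 4 * a) = b ↔ (b = a ∧ -1/3 ≤ a) ∨ (b = 1 + 4 * a ∧ a ≤ -1/3) := by
  rw [min_eq_iff]
  constructor <;> rintro (⟨h₁, h₂⟩ | ⟨h₁, h₂⟩)
  all_goals first
    | exact Or.inl ⟨by linarith, by linarith⟩
    | exact Or.inr ⟨by linarith, by linarith⟩

lemma min_one_add_two_mul_eq_iff {a b : ℝ} :
    min a (1 + 2 * b) = b ↔ (b = a ∨ b = -1) ∧ -1 ≤ a := by
  rw [min_eq_iff]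
  constructor
  · rintro (⟨h₁, h₂⟩ | ⟨h₁, h₂⟩)
    · exact ⟨Or.inl h₁.symm, by linarith⟩
    · exact ⟨Or.inr (by linarith), by linarith⟩
  · rintro ⟨rfl | rfl, h⟩
    · exact Or.inl ⟨rfl, by linarith⟩
    · exact Or.inr ⟨by norm_num, by linarith⟩

/-- The tropical equilibration set of {y − x − εx⁴ = 0, x − y + εy² = 0}:
the conditions min(a₁, 1+4a₁) = a₂ and min(a₁, 1+2a₂) = a₂ define exactly the
half-line {(a,a) : a ≥ -1/3} together with the isolated point (-1/2, -1). -/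
theorem stmt_4 :
    {p : ℝ × ℝ | min p.1 (1 + 4 * p.1) = p.2 ∧ min p.1 (1 + 2 * p.2) = p.2}
      = {p : ℝ × ℝ | p.1 = p.2 ∧ -1/3 ≤ p.1} ∪ {((-1/2 : ℝ), (-1 : ℝ))} := by
  ext ⟨a, b⟩
  simp only [Set.mem_ofPred_eq, Set.mem_union, Set.mem_singleton_iff, Prod.mk.injEq,
    min_one_add_four_mul_eq_iff, min_one_add_two_mul_eq_iff]
  constructor
  · rintro ⟨⟨hb, h⟩ | ⟨hb, h⟩, hb' | hb', -⟩
    · exact Or.inl ⟨hb.symm, h⟩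
    · exact Or.inl ⟨hb.symm, h⟩
    · exact Or.inl ⟨by linarith, by linarith⟩
    · exact Or.inr ⟨by linarith, hb'⟩
  · rintro (⟨rfl, h⟩ | ⟨rfl, rfl⟩)
    · exact ⟨Or.inl ⟨rfl, h⟩, Or.inl rfl, by linarith⟩
    · exact ⟨Or.inr ⟨by norm_num, by norm_num⟩, Or.inr rfl, by norm_num⟩
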